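/- Let (𝒢ₙ)_{n≥0} be regular families with 𝒢₀ containing all singletons and CB(𝒢ₙ) ≤ ω^ξ for all n, where 0 < ξ < ω₁, and let 1 = θ₀ > θ₁ > ⋯ with θₙ → 0. Then for any 0 < ε ≤ 1, the family {F ∈ [ℕ]^{<ℕ} : every convex combination x of (eᵢ)_{i∈F} satisfies ‖x‖_{(𝒢ₙ,θₙ)} ≥ ε} has Cantor–Bendixson index strictly less than ω^ξ. -/

import Mathlib

/-- Identify a finite subset of `ℕ` with a point of the Cantor space `ℕ → Bool`. -/
def toCantor (F : Finset ℕ) : ℕ → Bool := fun n => decide (n ∈ F)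

/-- Hereditary: closed under subsets. -/
def Hereditary (G : Set (Finset ℕ)) : Prop := ∀ ⦃E F : Finset ℕ⦄, E ⊆ F → F ∈ G → E ∈ G

/-- Spreading: closed under replacing elements by larger ones, keeping the
increasing order and the cardinality. -/
def Spreading (G : Set (Finset ℕ)) : Prop :=
  ∀ (E : Finset ℕ) (f : ℕ → ℕ), StrictMonoOn f ↑E → (∀ n ∈ E, n ≤ f n) →
    E ∈ G → E.image f ∈ G

/-- Regular: compact (in the Cantor topology), hereditary and spreading. -/
def IsRegularFam (G : Set (Finset ℕ)) : Prop :=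
  IsCompact (toCantor '' G) ∧ Hereditary G ∧ Spreading G

/-- The Cantor–Bendixson derivative. -/
def cbDeriv {α : Type*} [TopologicalSpace α] (K : Set α) : Set α :=
  {x | x ∈ K ∧ x ∈ closure (K \ {x})}

/-- Transfinite Cantor–Bendixson iterates. -/
noncomputable def cbIter {α : Type*} [TopologicalSpace α] (K : Set α) (ξ : Ordinal) : Set α :=
  Ordinal.limitRecOn ξ K (fun _ S => cbDeriv S)
    (fun o _ ih => ⋂ (ζ : Ordinal) (h : ζ < o), ih ζ h)


/-- The Schreier-space norm `‖x‖_𝒢 = max{‖Fx‖_{ℓ₁} : F ∈ 𝒢}` of a finitely supported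
sequence. -/
noncomputable def schNorm (G : Set (Finset ℕ)) (x : ℕ →₀ ℝ) : ℝ :=
  sSup {r | ∃ F ∈ G, r = ∑ i ∈ F, |x i|}

/-- The mixed Schreier norm `‖x‖ = sup_n θₙ ‖x‖_{𝒢ₙ}`. -/
noncomputable def mixedNorm (G : ℕ → Set (Finset ℕ)) (θ : ℕ → ℝ) (x : ℕ →₀ ℝ) : ℝ :=
  ⨆ n : ℕ, θ n * schNorm (G n) x


/-!
A finite set `F` lies in the `ζ`-th Cantor–Bendixson derivative of a hereditary spreading family
exactly when `F`, as a node of the tree of the family, has rank at least `ζ`: it can be extended to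
the right through the family along a well-founded tree of height `ζ` (`RankGe`).

The core is an averaging principle, proved by induction on `μ ≥ 1`: for finitely many hereditary
families of rank below `ω ^ μ` and `δ > 0` there is a budget `ι < ω ^ μ` such that in any
hereditary tree, every node of rank at least `γ + ι` extends, keeping rank at least `γ`, by a block
carrying a convex combination whose sums over all members of the families are below `δ`. At rank
`ω` this is a flat average over a long chain. From rank `ω ^ ν * n` to `ω ^ ν * (n + 1)` one
averages `M` consecutive blocks, each chosen against the localizations of the families at subsets
of the earlier blocks; a set `E` leaves the band of rank `ω ^ ν * n` in at most one block, which
costs only `1 / M`.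

Once `θ N < ε / 2`, only `𝒢₀, …, 𝒢_{N-1}` matter, and each has rank below `ω ^ ξ`. A node of rank
at least `ι` in the family of the theorem would then carry a convex combination of mixed norm at
most `ε / 2`, so that family has rank below `ι`.
-/

open scoped Ordinal

/-- `F`, as a node of the tree `A` whose children are the sets `insert m F` with `m > max F`, has
rank at least `ζ`. -/
noncomputable def RankGe (A : Set (Finset ℕ)) (ζ : Ordinal) : Finset ℕ → Prop :=
  Ordinal.limitRecOn (motive := fun _ => Finset ℕ → Prop) ζ (· ∈ A)
    (fun _ P F => F ∈ A ∧ ∃ m, (∀ i ∈ F, i < m) ∧ P (insert m F))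
    (fun _ _ P F => F ∈ A ∧ ∀ η (h : η < _), P η h F)

section RankGe

variable {A : Set (Finset ℕ)} {ζ η o : Ordinal} {E F : Finset ℕ}

theorem rankGe_zero : RankGe A 0 F ↔ F ∈ A := by
  rw [RankGe, Ordinal.limitRecOn_zero]

theorem rankGe_add_one :
    RankGe A (η + 1) F ↔ F ∈ A ∧ ∃ m, (∀ i ∈ F, i < m) ∧ RankGe A η (insert m F) := by
  rw [RankGe, Ordinal.limitRecOn_add_one]; rfl

theorem rankGe_of_isSuccLimit (ho : Order.IsSuccLimit o) :
    RankGe A o F ↔ F ∈ A ∧ ∀ η < o, RankGe A η F := by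
  rw [RankGe, Ordinal.limitRecOn_limit _ _ _ _ ho]; rfl

theorem RankGe.mem (h : RankGe A ζ F) : F ∈ A := by
  induction ζ using Ordinal.limitRecOn with
  | zero => exact rankGe_zero.1 h
  | add_one η _ => exact (rankGe_add_one.1 h).1
  | limit o ho _ => exact ((rankGe_of_isSuccLimit ho).1 h).1

theorem RankGe.subset (hA : Hereditary A) (h : RankGe A ζ F) (hEF : E ⊆ F) : RankGe A ζ E := by
  induction ζ using Ordinal.limitRecOn generalizing E F with
  | zero => exact rankGe_zero.2 (hA hEF (rankGe_zero.1 h))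
  | add_one η ih =>
    obtain ⟨hF, m, hm, hmF⟩ := rankGe_add_one.1 h
    exact rankGe_add_one.2
      ⟨hA hEF hF, m, fun i hi => hm i (hEF hi), ih hmF (Finset.insert_subset_insert m hEF)⟩
  | limit o ho ih =>
    rw [rankGe_of_isSuccLimit ho] at h ⊢
    exact ⟨hA hEF h.1, fun η hη => ih η hη (h.2 η hη) hEF⟩

theorem RankGe.mono (hA : Hereditary A) (h : RankGe A ζ F) (hηζ : η ≤ ζ) : RankGe A η F := by
  induction ζ using Ordinal.limitRecOn generalizing F with
  | zero => rwa [nonpos_iff_eq_zero.1 hηζ]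
  | add_one ζ ih =>
    rcases hηζ.lt_or_eq with hlt | rfl
    · obtain ⟨-, m, -, hm⟩ := rankGe_add_one.1 h
      exact ih (hm.subset hA (Finset.subset_insert m F)) (Order.lt_add_one_iff.1 hlt)
    · exact h
  | limit o ho ih =>
    rcases hηζ.lt_or_eq with hlt | rfl
    · exact ((rankGe_of_isSuccLimit ho).1 h).2 η hlt
    · exact h

theorem RankGe.add_card (hA : Hereditary A) (h : RankGe A ζ F) : RankGe A (ζ + F.card) ∅ := by
  classical
  induction F using Finset.induction_on_max generalizing ζ with
  | empty => simpa using h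
  | insert a s hs ih =>
    have hsucc : RankGe A (ζ + 1) s :=
      rankGe_add_one.2 ⟨hA (Finset.subset_insert a s) h.mem, a, hs, h⟩
    have ha : a ∉ s := fun ha => (hs a ha).false
    rw [Finset.card_insert_of_notMem ha, Nat.cast_succ, ← Nat.cast_one, ← Nat.cast_add,
      Nat.add_comm, Nat.cast_add, ← add_assoc, Nat.cast_one]
    exact ih hsucc

theorem exists_lt_not_rankGe (ho : Order.IsSuccLimit o) (h : ¬ RankGe A o F) :
    ∃ η < o, ¬ RankGe A η F := by
  by_contra! hall
  exact h ((rankGe_of_isSuccLimit ho).2 ⟨(hall 0 ho.bot_lt).mem, hall⟩)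

theorem RankGe.image (hS : Spreading A) {f : ℕ → ℕ} (hf : StrictMono f) (hle : ∀ n, n ≤ f n)
    (h : RankGe A ζ F) : RankGe A ζ (F.image f) := by
  have hSf : ∀ G ∈ A, G.image f ∈ A := fun G => hS G f (hf.strictMonoOn _) fun n _ => hle n
  induction ζ using Ordinal.limitRecOn generalizing F with
  | zero => exact rankGe_zero.2 (hSf F (rankGe_zero.1 h))
  | add_one η ih =>
    obtain ⟨hF, m, hm, hmF⟩ := rankGe_add_one.1 h
    refine rankGe_add_one.2 ⟨hSf F hF, f m, ?_, ?_⟩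
    · simp only [Finset.mem_image, forall_exists_index, and_imp, forall_apply_eq_imp_iff₂]
      exact fun i hi => hf (hm i hi)
    · simpa [Finset.image_insert] using ih hmF
  | limit o ho ih =>
    rw [rankGe_of_isSuccLimit ho] at h ⊢
    exact ⟨hSf F h.1, fun η hη => ih η hη (h.2 η hη)⟩

theorem RankGe.exists_gt_of_add_one (hS : Spreading A) (h : RankGe A (η + 1) F) (M : ℕ) :
    ∃ m, M < m ∧ (∀ i ∈ F, i < m) ∧ RankGe A η (insert m F) := by
  obtain ⟨-, m, hm, hmF⟩ := rankGe_add_one.1 h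
  set f : ℕ → ℕ := fun n => if n < m then n else n + (M + 1)
  have hf : StrictMono f := fun a b hab => by simp only [f]; split_ifs <;> omega
  have hfF : (insert m F).image f = insert (m + (M + 1)) F := by
    have hfid : F.image f = F.image id := Finset.image_congr fun i hi => if_pos (hm i hi)
    rw [Finset.image_insert, show f m = m + (M + 1) from if_neg (lt_irrefl m), hfid,
      Finset.image_id]
  refine ⟨m + (M + 1), by omega, fun i hi => by have := hm i hi; omega, ?_⟩
  rw [← hfF]
  exact hmF.image hS hf fun n => by simp only [f]; split_ifs <;> omega

end RankGe

section CantorBendixson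

variable {α : Type*} [TopologicalSpace α] {K : Set α}

theorem cbIter_zero : cbIter K 0 = K := by
  rw [cbIter, Ordinal.limitRecOn_zero]

theorem cbIter_add_one (η : Ordinal) : cbIter K (η + 1) = cbDeriv (cbIter K η) := by
  rw [cbIter, Ordinal.limitRecOn_add_one]; rfl

theorem cbIter_of_isSuccLimit {o : Ordinal} (ho : Order.IsSuccLimit o) :
    cbIter K o = ⋂ η < o, cbIter K η := by
  rw [cbIter, Ordinal.limitRecOn_limit _ _ _ _ ho]; rfl

theorem cbIter_subset (ζ : Ordinal) : cbIter K ζ ⊆ K := by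
  induction ζ using Ordinal.limitRecOn with
  | zero => rw [cbIter_zero]
  | add_one η ih => exact fun x hx => ih (by rw [cbIter_add_one] at hx; exact hx.1)
  | limit o ho ih =>
    rw [cbIter_of_isSuccLimit ho]
    exact fun x hx => ih 0 ho.bot_lt (Set.mem_iInter₂.1 hx 0 ho.bot_lt)

end CantorBendixson

theorem toCantor_injective : Function.Injective toCantor := fun E F h =>
  Finset.ext fun i => by simpa [toCantor] using congrFun h i

theorem tendsto_toCantor_insert (F : Finset ℕ) {s : ℕ → ℕ} (hs : Filter.Tendsto s .atTop .atTop) :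
    Filter.Tendsto (fun k => toCantor (insert (s k) F)) .atTop (nhds (toCantor F)) := by
  refine tendsto_pi_nhds.2 fun i => tendsto_const_nhds.congr' ?_
  filter_upwards [hs.eventually_gt_atTop i] with k hk
  simp [toCantor, hk.ne]

theorem exists_agree_of_mem_closure {T : Set (ℕ → Bool)} {y : ℕ → Bool} (hy : y ∈ closure T)
    (N : ℕ) : ∃ z ∈ T, ∀ i < N, z i = y i := by
  have hU : IsOpen ((Set.Iio N).pi fun i => {y i}) :=
    isOpen_set_pi (Set.finite_Iio N) fun _ _ => isOpen_discrete _
  obtain ⟨z, hzU, hzT⟩ := mem_closure_iff.1 hy _ hU fun i _ => rfl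
  exact ⟨z, hzT, fun i hi => hzU i hi⟩

section CantorBendixsonRank

variable {A : Set (Finset ℕ)} {ζ : Ordinal} {F : Finset ℕ}

theorem rankGe_of_toCantor_mem_cbIter (hA : Hereditary A)
    (h : toCantor F ∈ cbIter (toCantor '' A) ζ) : RankGe A ζ F := by
  induction ζ using Ordinal.limitRecOn generalizing F with
  | zero =>
    rw [cbIter_zero, toCantor_injective.mem_set_image] at h
    exact rankGe_zero.2 h
  | add_one η ih =>
    rw [cbIter_add_one] at h
    obtain ⟨hη, hcl⟩ := h
    obtain ⟨z, ⟨hz, hzF⟩, hagree⟩ := exists_agree_of_mem_closure hcl (F.sup id + 1)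
    obtain ⟨F', -, rfl⟩ := cbIter_subset η hz
    have hagree' : ∀ i ≤ F.sup id, i ∈ F' ↔ i ∈ F := fun i hi => by
      simpa [toCantor] using hagree i (Nat.lt_succ_of_le hi)
    have hFF' : F ⊆ F' := fun i hi => (hagree' i (Finset.le_sup (f := id) hi)).2 hi
    obtain ⟨m, hmF', hmF⟩ : ∃ m ∈ F', m ∉ F := by
      by_contra! hsub
      exact hzF (congrArg toCantor (Finset.Subset.antisymm hsub hFF'))
    have hm : ∀ i ∈ F, i < m := fun i hi => by
      by_contra! hmi
      exact hmF ((hagree' m (hmi.trans (Finset.le_sup (f := id) hi))).1 hmF')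
    exact rankGe_add_one.2 ⟨(ih hη).mem, m, hm,
      (ih hz).subset hA (Finset.insert_subset hmF' hFF')⟩
  | limit o ho ih =>
    rw [cbIter_of_isSuccLimit ho, Set.mem_iInter₂] at h
    exact (rankGe_of_isSuccLimit ho).2 ⟨(ih 0 ho.bot_lt (h 0 ho.bot_lt)).mem,
      fun η hη => ih η hη (h η hη)⟩

theorem toCantor_mem_cbIter_of_rankGe (hA : Hereditary A) (hS : Spreading A)
    (h : RankGe A ζ F) : toCantor F ∈ cbIter (toCantor '' A) ζ := by
  induction ζ using Ordinal.limitRecOn generalizing F with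
  | zero => rw [cbIter_zero]; exact Set.mem_image_of_mem toCantor (rankGe_zero.1 h)
  | add_one η ih =>
    rw [cbIter_add_one]
    refine ⟨ih (h.mono hA (Order.le_succ η)), ?_⟩
    choose s hs hsF hsη using h.exists_gt_of_add_one hS
    have hne : ∀ k, toCantor (insert (s k) F) ≠ toCantor F := fun k heq =>
      (hsF k (s k) (Finset.insert_eq_self.1 (toCantor_injective heq))).false
    exact mem_closure_of_tendsto
      (tendsto_toCantor_insert F (Filter.tendsto_atTop_mono (fun k => (hs k).le) Filter.tendsto_id))
      (.of_forall fun k => ⟨ih (hsη k), hne k⟩)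
  | limit o ho ih =>
    rw [cbIter_of_isSuccLimit ho, Set.mem_iInter₂]
    exact fun η hη => ih η hη (((rankGe_of_isSuccLimit ho).1 h).2 η hη)

theorem cbIter_eq_empty_of_not_rankGe (hA : Hereditary A) (h : ¬ RankGe A ζ ∅) :
    cbIter (toCantor '' A) ζ = ∅ :=
  Set.eq_empty_of_forall_notMem fun y hy => by
    obtain ⟨F, -, rfl⟩ := cbIter_subset ζ hy
    exact h ((rankGe_of_toCantor_mem_cbIter hA hy).subset hA (Finset.empty_subset F))

end CantorBendixsonRank

section Vectors

variable {x : ℕ →₀ ℝ} {S : Finset ℕ}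

theorem sum_inter_of_support_subset (hx : x.support ⊆ S) (E : Finset ℕ) :
    ∑ i ∈ E ∩ S, x i = ∑ i ∈ E, x i :=
  Finset.sum_subset Finset.inter_subset_left fun _ hiE hiS =>
    Finsupp.notMem_support_iff.1 fun hi => hiS (Finset.mem_inter.2 ⟨hiE, hx hi⟩)

theorem degree_eq_sum_of_support_subset (hx : x.support ⊆ S) : x.degree = ∑ i ∈ S, x i :=
  Finset.sum_subset hx fun _ _ => Finsupp.notMem_support_iff.1

theorem sum_le_degree (hx : ∀ i, 0 ≤ x i) (E : Finset ℕ) : ∑ i ∈ E, x i ≤ x.degree := by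
  rw [← sum_inter_of_support_subset subset_rfl, Finsupp.degree_apply]
  exact Finset.sum_le_sum_of_subset_of_nonneg Finset.inter_subset_right fun i _ _ => hx i

theorem degree_smul (c : ℝ) (x : ℕ →₀ ℝ) : (c • x).degree = c * x.degree := by
  rw [degree_eq_sum_of_support_subset Finsupp.support_smul, Finsupp.degree_apply, Finset.mul_sum]
  rfl

end Vectors

def IsInitialSegment (p F : Finset ℕ) : Prop :=
  p ⊆ F ∧ ∀ b ∈ p, ∀ a ∈ F \ p, b < a

theorem IsInitialSegment.refl (p : Finset ℕ) : IsInitialSegment p p :=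
  ⟨subset_rfl, by simp⟩

theorem IsInitialSegment.insert {p : Finset ℕ} {m : ℕ} (hm : ∀ i ∈ p, i < m) :
    IsInitialSegment p (insert m p) :=
  ⟨Finset.subset_insert m p, fun b hb a ha => by
    obtain ⟨rfl | ha, hap⟩ := by simpa using ha
    exacts [hm b hb, absurd ha hap]⟩

theorem IsInitialSegment.trans {p F G : Finset ℕ} (hpF : IsInitialSegment p F)
    (hFG : IsInitialSegment F G) : IsInitialSegment p G := by
  refine ⟨hpF.1.trans hFG.1, fun b hb a ha => ?_⟩
  rw [Finset.mem_sdiff] at ha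
  by_cases haF : a ∈ F
  · exact hpF.2 b hb a (Finset.mem_sdiff.2 ⟨haF, ha.2⟩)
  · exact hFG.2 b (hpF.1 hb) a (Finset.mem_sdiff.2 ⟨ha.1, haF⟩)

theorem RankGe.exists_initialSegment_card {𝓑 : Set (Finset ℕ)} {γ : Ordinal} {p : Finset ℕ}
    {L : ℕ} (h : RankGe 𝓑 (γ + L) p) :
    ∃ F, IsInitialSegment p F ∧ RankGe 𝓑 γ F ∧ (F \ p).card = L := by
  induction L generalizing p with
  | zero => exact ⟨p, .refl p, by simpa using h, by simp⟩
  | succ L ih =>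
    rw [Nat.cast_succ, ← add_assoc] at h
    obtain ⟨-, m, hm, hmp⟩ := rankGe_add_one.1 h
    obtain ⟨F, hpF, hF, hcard⟩ := ih hmp
    refine ⟨F, (IsInitialSegment.insert hm).trans hpF, hF, ?_⟩
    have hmp : m ∉ p := fun hmp => (hm m hmp).false
    have hpF' := Finset.card_le_card hpF.1
    rw [Finset.card_sdiff_of_subset hpF.1] at hcard
    rw [Finset.card_insert_of_notMem hmp] at hcard hpF'
    rw [Finset.card_sdiff_of_subset ((Finset.subset_insert m p).trans hpF.1)]
    omega

def localization (A : Set (Finset ℕ)) (q : Finset ℕ) : Set (Finset ℕ) :=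
  {D | (∀ i ∈ q, ∀ j ∈ D, i < j) ∧ q ∪ D ∈ A}

def upperBand (A : Set (Finset ℕ)) (τ : Ordinal) : Set (Finset ℕ) := {q | RankGe A τ q}

section Localization

variable {A : Set (Finset ℕ)} {q D : Finset ℕ}

theorem Hereditary.localization (hA : Hereditary A) (q : Finset ℕ) :
    Hereditary (localization A q) := fun _ _ hEF hF =>
  ⟨fun i hi j hj => hF.1 i hi j (hEF hj), hA (Finset.union_subset_union subset_rfl hEF) hF.2⟩

theorem Hereditary.upperBand (hA : Hereditary A) (τ : Ordinal) : Hereditary (upperBand A τ) :=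
  fun _ _ hEF hF => RankGe.subset hA hF hEF

theorem RankGe.of_localization {ζ : Ordinal} (h : RankGe (localization A q) ζ D) :
    RankGe A ζ (q ∪ D) := by
  induction ζ using Ordinal.limitRecOn generalizing D with
  | zero => exact rankGe_zero.2 (rankGe_zero.1 h).2
  | add_one η ih =>
    obtain ⟨hD, m, hm, hmD⟩ := rankGe_add_one.1 h
    have hqm : ∀ i ∈ q, i < m := fun i hi => hmD.mem.1 i hi m (Finset.mem_insert_self m D)
    refine rankGe_add_one.2 ⟨hD.2, m, fun i hi => ?_, by simpa using ih hmD⟩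
    rcases Finset.mem_union.1 hi with hi | hi
    exacts [hqm i hi, hm i hi]
  | limit o ho ih =>
    rw [rankGe_of_isSuccLimit ho] at h ⊢
    exact ⟨h.1.2, fun η hη => ih η hη (h.2 η hη)⟩

theorem RankGe.of_upperBand (hA : Hereditary A) {τ σ : Ordinal}
    (h : RankGe (upperBand A τ) σ q) : RankGe A (τ + σ) q := by
  induction σ using Ordinal.limitRecOn generalizing q with
  | zero => simpa [upperBand] using rankGe_zero.1 h
  | add_one σ ih =>
    obtain ⟨hq, m, hm, hmq⟩ := rankGe_add_one.1 h
    rw [← add_assoc]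
    exact rankGe_add_one.2 ⟨RankGe.mem hq, m, hm, ih hmq⟩
  | limit o ho ih =>
    rw [rankGe_of_isSuccLimit ho] at h
    refine (rankGe_of_isSuccLimit (Ordinal.isSuccLimit_add τ ho)).2 ⟨RankGe.mem h.1, fun ρ hρ => ?_⟩
    obtain ⟨σ, hσ, hρσ⟩ := (Ordinal.lt_add_iff_of_isSuccLimit ho).1 hρ
    exact (ih σ hσ (h.2 σ hσ)).mono hA hρσ.le

end Localization

def CanAverage (𝒞 : Finset (Set (Finset ℕ))) (δ : ℝ) (ι : Ordinal) : Prop :=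
  ∀ 𝓑 : Set (Finset ℕ), Hereditary 𝓑 → ∀ γ p, RankGe 𝓑 (γ + ι) p →
    ∃ F, IsInitialSegment p F ∧ RankGe 𝓑 γ F ∧
      ∃ x : ℕ →₀ ℝ, x.support ⊆ F \ p ∧ (∀ i, 0 ≤ x i) ∧ x.degree = 1 ∧
        ∀ A ∈ 𝒞, ∀ E ∈ A, ∑ i ∈ E, x i < δ

def UniformlyAverages (α : Ordinal) (δ : ℝ) (ι : Ordinal) : Prop :=
  ∀ 𝒞 : Finset (Set (Finset ℕ)), (∀ A ∈ 𝒞, Hereditary A ∧ ¬ RankGe A α ∅) → CanAverage 𝒞 δ ι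

def AveragesBelow (α : Ordinal) : Prop :=
  ∀ 𝒞 : Finset (Set (Finset ℕ)), (∀ A ∈ 𝒞, Hereditary A ∧ ¬ RankGe A α ∅) →
    ∀ δ > 0, ∃ ι < α, CanAverage 𝒞 δ ι

theorem CanAverage.mono {𝒞 : Finset (Set (Finset ℕ))} {δ : ℝ} {ι ι' : Ordinal}
    (h : CanAverage 𝒞 δ ι) (hι : ι ≤ ι') : CanAverage 𝒞 δ ι' := fun 𝓑 h𝓑 γ p hp =>
  h 𝓑 h𝓑 γ p (hp.mono h𝓑 (add_le_add_right hι γ))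

theorem AveragesBelow.uniformly {α : Ordinal} (h : AveragesBelow α) {δ : ℝ} (hδ : 0 < δ) :
    UniformlyAverages α δ α := fun 𝒞 h𝒞 => by
  obtain ⟨ι, hι, hav⟩ := h 𝒞 h𝒞 δ hδ
  exact hav.mono hι.le

theorem exists_forall_not_rankGe {I : Type*} [Preorder I] [IsDirectedOrder I] [Nonempty I]
    {f : I → Ordinal} (hf : Monotone f) {𝒞 : Finset (Set (Finset ℕ))}
    (h𝒞 : ∀ A ∈ 𝒞, Hereditary A ∧ ∃ i, ¬ RankGe A (f i) ∅) :
    ∃ i, ∀ A ∈ 𝒞, ¬ RankGe A (f i) ∅ := by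
  classical
  choose! i hi using fun A hA => (h𝒞 A hA).2
  obtain ⟨M, hM⟩ := (𝒞.image i).exists_le
  exact ⟨M, fun A hA hM' =>
    hi A hA (hM'.mono (h𝒞 A hA).1 (hf (hM _ (Finset.mem_image_of_mem i hA))))⟩

theorem card_lt_of_not_rankGe {A : Set (Finset ℕ)} (hA : Hereditary A) {n : ℕ}
    (h : ¬ RankGe A n ∅) {E : Finset ℕ} (hE : E ∈ A) : E.card < n := by
  by_contra! hn
  have hE' := (rankGe_zero.2 hE).add_card hA
  rw [zero_add] at hE'
  exact h (hE'.mono hA (by exact_mod_cast hn))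

theorem averagesBelow_omega0 : AveragesBelow ω := by
  intro 𝒞 h𝒞 δ hδ
  obtain ⟨n, hn⟩ : ∃ n : ℕ, ∀ A ∈ 𝒞, ¬ RankGe A n ∅ := by
    refine exists_forall_not_rankGe Nat.mono_cast fun A hA => ⟨(h𝒞 A hA).1, ?_⟩
    obtain ⟨η, hη, hAη⟩ := exists_lt_not_rankGe Ordinal.isSuccLimit_omega0 (h𝒞 A hA).2
    obtain ⟨n, rfl⟩ := Ordinal.lt_omega0.1 hη
    exact ⟨n, hAη⟩
  obtain ⟨L, hL⟩ := exists_nat_gt (n / δ)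
  have hL0 : (0 : ℝ) < L := lt_of_le_of_lt (by positivity) hL
  refine ⟨L, Ordinal.natCast_lt_omega0 L, fun 𝓑 _ γ p hp => ?_⟩
  obtain ⟨F, hpF, hF, hcard⟩ := hp.exists_initialSegment_card
  set x := Finsupp.indicator (F \ p) fun _ _ => (L : ℝ)⁻¹
  have hx : ∀ i, x i = if i ∈ F \ p then (L : ℝ)⁻¹ else 0 := fun i => by
    simp [x, Finsupp.indicator_apply]
  refine ⟨F, hpF, hF, x, (Finsupp.support_indicator_subset _ _), fun i => by rw [hx]; positivity,
    ?_, fun A hA E hE => ?_⟩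
  · rw [degree_eq_sum_of_support_subset (Finsupp.support_indicator_subset _ _),
      Finset.sum_congr rfl fun i hi => (hx i).trans (if_pos hi)]
    simp [hcard, hL0.ne']
  · calc ∑ i ∈ E, x i ≤ ∑ _i ∈ E, (L : ℝ)⁻¹ :=
          Finset.sum_le_sum fun i _ => by rw [hx]; split_ifs; exacts [le_rfl, by positivity]
      _ = E.card / L := by simp [div_eq_mul_inv]
      _ < δ := by
          rw [div_lt_iff₀ hL0, ← div_lt_iff₀' hδ]
          exact lt_of_le_of_lt (by gcongr; exact_mod_cast
            (card_lt_of_not_rankGe (h𝒞 A hA).1 (hn A hA) hE).le) hL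

/-- At a node `q`, the part of `A` beyond `q` is split into the part inside the band of rank `τ`
and, when `q` is already outside the band, the part below it. If `A` has rank below `τ + τ`,
both have rank below `τ`. -/
noncomputable def localFamilies (𝒞 : Finset (Set (Finset ℕ))) (τ : Ordinal) (R : Finset ℕ) :
    Finset (Set (Finset ℕ)) :=
  open Classical in
  (𝒞 ×ˢ R.powerset).image (fun Aq => localization (upperBand Aq.1 τ) Aq.2) ∪
    ((𝒞 ×ˢ R.powerset).filter fun Aq => ¬ RankGe Aq.1 τ Aq.2).image
      fun Aq => localization Aq.1 Aq.2

section LocalFamilies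

variable {𝒞 : Finset (Set (Finset ℕ))} {τ : Ordinal} {R q : Finset ℕ} {A : Set (Finset ℕ)}

theorem localization_upperBand_mem_localFamilies (hA : A ∈ 𝒞) (hq : q ⊆ R) :
    localization (upperBand A τ) q ∈ localFamilies 𝒞 τ R := by
  classical
  refine Finset.mem_union_left _ (Finset.mem_image.2 ⟨(A, q), ?_, rfl⟩)
  simp [hA, hq]

theorem localization_mem_localFamilies (hA : A ∈ 𝒞) (hq : q ⊆ R) (h : ¬ RankGe A τ q) :
    localization A q ∈ localFamilies 𝒞 τ R := by
  classical
  refine Finset.mem_union_right _ (Finset.mem_image.2 ⟨(A, q), ?_, rfl⟩)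
  simp [hA, hq, h]

theorem localFamilies_rank {σ : Ordinal} (hσ : σ ≤ τ + τ)
    (h𝒞 : ∀ A ∈ 𝒞, Hereditary A ∧ ¬ RankGe A σ ∅) (R : Finset ℕ) :
    ∀ B ∈ localFamilies 𝒞 τ R, Hereditary B ∧ ¬ RankGe B τ ∅ := by
  classical
  intro B hB
  simp only [localFamilies, Finset.mem_union, Finset.mem_image, Finset.mem_filter,
    Finset.mem_product, Prod.exists] at hB
  rcases hB with ⟨A, q, ⟨hA, -⟩, rfl⟩ | ⟨A, q, ⟨⟨hA, -⟩, hAq⟩, rfl⟩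
  · obtain ⟨hAh, hAσ⟩ := h𝒞 A hA
    refine ⟨(hAh.upperBand τ).localization q, fun h => hAσ ?_⟩
    have hq := (RankGe.of_upperBand hAh (by simpa using h.of_localization)).add_card hAh
    exact hq.mono hAh (hσ.trans le_self_add)
  · exact ⟨(h𝒞 A hA).1.localization q, fun h => hAq (by simpa using h.of_localization)⟩

end LocalFamilies

theorem add_indicator_upperBand_le {A : Set (Finset ℕ)} (hA : Hereditary A) {τ : Ordinal}
    {q e : Finset ℕ} {s δ : ℝ} (hδ : 0 ≤ δ) (hs : s ≤ 1)
    (hup : RankGe A τ (q ∪ e) → s < δ) (hlow : ¬ RankGe A τ q → s < δ) :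
    s + (upperBand A τ).indicator 1 (q ∪ e) ≤ δ + (upperBand A τ).indicator 1 q := by
  by_cases hqe : RankGe A τ (q ∪ e)
  · have hq : q ∈ upperBand A τ := hqe.subset hA Finset.subset_union_left
    rw [Set.indicator_of_mem (show q ∪ e ∈ upperBand A τ from hqe), Set.indicator_of_mem hq]
    simp only [Pi.one_apply]
    linarith [hup hqe]
  · rw [Set.indicator_of_notMem (show q ∪ e ∉ upperBand A τ from hqe)]
    by_cases hq : q ∈ upperBand A τ
    · rw [Set.indicator_of_mem hq, Pi.one_apply]
      linarith
    · rw [Set.indicator_of_notMem hq]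
      linarith [hlow hq]

/-- The indicator term pays for the single block in which `E` leaves the band of rank `τ`. -/
theorem exists_blocks {𝒞 : Finset (Set (Finset ℕ))} (h𝒞 : ∀ A ∈ 𝒞, Hereditary A) {τ c : Ordinal}
    {δ : ℝ} (hδ : 0 ≤ δ) (hstep : ∀ R, CanAverage (localFamilies 𝒞 τ R) δ c)
    {𝓑 : Set (Finset ℕ)} (h𝓑 : Hereditary 𝓑) (k : ℕ) {γ : Ordinal} {p R : Finset ℕ}
    (hRp : R ⊆ p) (hp : RankGe 𝓑 (γ + c * k) p) :
    ∃ F, IsInitialSegment p F ∧ RankGe 𝓑 γ F ∧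
      ∃ v : ℕ →₀ ℝ, v.support ⊆ F \ p ∧ (∀ i, 0 ≤ v i) ∧ v.degree = k ∧
        ∀ A ∈ 𝒞, ∀ E ∈ A, E ⊆ R ∪ (F \ p) →
          ∑ i ∈ E, v i ≤ k * δ + (upperBand A τ).indicator 1 (E ∩ R) := by
  induction k generalizing γ p R with
  | zero =>
    refine ⟨p, .refl p, by simpa using hp, 0, by simp, fun _ => le_rfl, by simp,
      fun A _ E _ _ => ?_⟩
    simp only [Finsupp.coe_zero, Pi.zero_apply, Finset.sum_const_zero, CharP.cast_eq_zero,
      zero_mul, zero_add]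
    exact Set.indicator_apply_nonneg fun _ => zero_le_one
  | succ k ih =>
    rw [Nat.cast_succ, mul_add_one, ← add_assoc] at hp
    obtain ⟨F₁, hpF₁, hF₁, x, hxF₁, hx0, hx1, hx⟩ := hstep R 𝓑 h𝓑 _ p hp
    obtain ⟨F, hF₁F, hF, v, hvF, hv0, hv1, hv⟩ :=
      ih (R := R ∪ (F₁ \ p)) (Finset.union_subset (hRp.trans hpF₁.1) Finset.sdiff_subset) hF₁
    refine ⟨F, hpF₁.trans hF₁F, hF, x + v, ?_, fun i => add_nonneg (hx0 i) (hv0 i), ?_,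
      fun A hA E hE hER => ?_⟩
    · exact Finsupp.support_add.trans (Finset.union_subset
        (hxF₁.trans (Finset.sdiff_subset_sdiff hF₁F.1 subset_rfl))
        (hvF.trans (Finset.sdiff_subset_sdiff subset_rfl hpF₁.1)))
    · rw [map_add, hx1, hv1]; push_cast; ring
    set q := E ∩ R
    set e := E ∩ (F₁ \ p)
    have hsep : ∀ i ∈ q, ∀ j ∈ e, i < j := fun i hi j hj =>
      hpF₁.2 i (hRp (Finset.mem_inter.1 hi).2) j (Finset.mem_inter.1 hj).2
    have hqe : q ∪ e ⊆ E := Finset.union_subset Finset.inter_subset_left Finset.inter_subset_left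
    have hvE := hv A hA E hE (hER.trans (by
      rw [Finset.union_assoc, Finset.union_comm (F₁ \ p)]
      exact Finset.union_subset_union subset_rfl (sdiff_triangle F F₁ p)))
    rw [Finset.inter_union_distrib_left] at hvE
    have hxE := add_indicator_upperBand_le (h𝒞 A hA) hδ
      ((sum_le_degree hx0 e).trans hx1.le)
      (fun h => hx _ (localization_upperBand_mem_localFamilies hA Finset.inter_subset_right) e
        ⟨hsep, h⟩)
      (fun h => hx _ (localization_mem_localFamilies hA Finset.inter_subset_right h) e
        ⟨hsep, h𝒞 A hA hqe hE⟩)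
    rw [sum_inter_of_support_subset hxF₁] at hxE
    simp only [Finsupp.coe_add, Pi.add_apply, Finset.sum_add_distrib]
    push_cast
    linarith

theorem UniformlyAverages.exists_mul {τ σ c : Ordinal} (hσ : σ ≤ τ + τ) {δ : ℝ} (hδ : 0 < δ)
    (h : UniformlyAverages τ (δ / 2) c) : ∃ M : ℕ, UniformlyAverages σ δ (c * M) := by
  obtain ⟨M, hM⟩ := exists_nat_gt (2 / δ)
  have hM0 : (0 : ℝ) < M := lt_trans (by positivity) hM
  refine ⟨M, fun 𝒞 h𝒞 𝓑 h𝓑 γ p hp => ?_⟩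
  obtain ⟨F, hpF, hF, v, hvF, hv0, hv1, hv⟩ :=
    exists_blocks (fun A hA => (h𝒞 A hA).1) (half_pos hδ).le
      (fun R => h _ (localFamilies_rank hσ h𝒞 R)) h𝓑 M (Finset.empty_subset p) hp
  refine ⟨F, hpF, hF, (M : ℝ)⁻¹ • v, Finsupp.support_smul.trans hvF,
    fun i => mul_nonneg (inv_nonneg.2 hM0.le) (hv0 i),
    by rw [degree_smul, hv1, inv_mul_cancel₀ hM0.ne'], fun A hA E hE => ?_⟩
  have hvE := hv A hA (E ∩ (F \ p)) ((h𝒞 A hA).1 Finset.inter_subset_left hE)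
    (by simp [Finset.inter_subset_right])
  rw [Finset.inter_assoc, Finset.inter_empty, Finset.inter_empty,
    sum_inter_of_support_subset hvF] at hvE
  calc ∑ i ∈ E, ((M : ℝ)⁻¹ • v) i = (M : ℝ)⁻¹ * ∑ i ∈ E, v i := by simp [Finset.mul_sum]
    _ ≤ (M : ℝ)⁻¹ * (M * (δ / 2) + 1) := by
        gcongr
        refine hvE.trans (add_le_add_right ?_ _)
        exact Set.indicator_apply_le' (fun _ => le_rfl) fun _ => zero_le_one
    _ = δ / 2 + (M : ℝ)⁻¹ := by field_simp
    _ < δ := by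
        have : (M : ℝ)⁻¹ < δ / 2 := by
          rw [inv_lt_comm₀ hM0 (half_pos hδ), inv_div]; exact hM
        linarith

theorem AveragesBelow.exists_uniformly_mul {ν : Ordinal} (h : AveragesBelow (ω ^ ν)) {n : ℕ}
    (hn : 1 ≤ n) {δ : ℝ} (hδ : 0 < δ) : ∃ g : ℕ, UniformlyAverages (ω ^ ν * n) δ (ω ^ ν * g) := by
  induction n, hn using Nat.le_induction generalizing δ with
  | base => exact ⟨1, by simpa using h.uniformly hδ⟩
  | succ n hn ih =>
    obtain ⟨g, hg⟩ := ih (half_pos hδ)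
    have hσ : ω ^ ν * ↑(n + 1) ≤ ω ^ ν * n + ω ^ ν * n := by
      rw [Nat.cast_succ, mul_add_one]
      gcongr
      exact Ordinal.le_mul_left _ (by exact_mod_cast hn)
    obtain ⟨M, hM⟩ := hg.exists_mul hσ hδ
    exact ⟨g * M, by rwa [Ordinal.natCast_mul, ← mul_assoc]⟩

theorem AveragesBelow.opow_add_one {ν : Ordinal} (h : AveragesBelow (ω ^ ν)) :
    AveragesBelow (ω ^ (ν + 1)) := by
  intro 𝒞 h𝒞 δ hδ
  rw [Ordinal.opow_add_one] at h𝒞 ⊢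
  have hpos : 0 < ω ^ ν := Ordinal.opow_pos ν Ordinal.omega0_pos
  obtain ⟨n, hn⟩ : ∃ n : ℕ, ∀ A ∈ 𝒞, ¬ RankGe A (ω ^ ν * n) ∅ := by
    refine exists_forall_not_rankGe (fun _ _ hab => mul_le_mul_right (by exact_mod_cast hab) _)
      fun A hA => ⟨(h𝒞 A hA).1, ?_⟩
    obtain ⟨η, hη, hAη⟩ := exists_lt_not_rankGe
      (Ordinal.isSuccLimit_mul_right hpos Ordinal.isSuccLimit_omega0) (h𝒞 A hA).2
    obtain ⟨b, hb, hηb⟩ := (Ordinal.lt_mul_iff_of_isSuccLimit Ordinal.isSuccLimit_omega0).1 hη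
    obtain ⟨n, rfl⟩ := Ordinal.lt_omega0.1 hb
    exact ⟨n, fun hn => hAη (hn.mono (h𝒞 A hA).1 hηb.le)⟩
  obtain ⟨g, hg⟩ := h.exists_uniformly_mul (Nat.le_add_left 1 n) hδ
  refine ⟨ω ^ ν * g, (mul_lt_mul_iff_right₀ hpos).2 (Ordinal.natCast_lt_omega0 g), hg 𝒞 ?_⟩
  refine fun A hA => ⟨(h𝒞 A hA).1, fun hA' => hn A hA (hA'.mono (h𝒞 A hA).1 ?_)⟩
  exact mul_le_mul_right (by exact_mod_cast Nat.le_succ n) _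

theorem averagesBelow_opow_of_isSuccLimit {μ : Ordinal} (hμ : Order.IsSuccLimit μ)
    (ih : ∀ ν < μ, 1 ≤ ν → AveragesBelow (ω ^ ν)) : AveragesBelow (ω ^ μ) := by
  intro 𝒞 h𝒞 δ hδ
  have h1μ : 1 < μ := Ordinal.one_lt_of_isSuccLimit hμ
  have : Nonempty (Set.Ico 1 μ) := ⟨⟨1, le_rfl, h1μ⟩⟩
  obtain ⟨⟨ν, h1ν, hνμ⟩, hν⟩ : ∃ ν : Set.Ico 1 μ, ∀ A ∈ 𝒞, ¬ RankGe A (ω ^ (ν : Ordinal)) ∅ := by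
    refine exists_forall_not_rankGe (f := fun ν : Set.Ico 1 μ => ω ^ (ν : Ordinal))
      (fun _ _ hab => Ordinal.opow_le_opow_right Ordinal.omega0_pos hab)
      fun A hA => ⟨(h𝒞 A hA).1, ?_⟩
    obtain ⟨η, hη, hAη⟩ := exists_lt_not_rankGe
      (Ordinal.isSuccLimit_opow Ordinal.one_lt_omega0 hμ) (h𝒞 A hA).2
    obtain ⟨ν, hνμ, hην⟩ := (Ordinal.lt_opow_of_isSuccLimit Ordinal.omega0_ne_zero hμ).1 hη
    refine ⟨⟨max ν 1, le_max_right _ _, max_lt hνμ h1μ⟩, fun hA' => hAη (hA'.mono (h𝒞 A hA).1 ?_)⟩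
    exact hην.le.trans (Ordinal.opow_le_opow_right Ordinal.omega0_pos (le_max_left _ _))
  obtain ⟨ι, hι, hav⟩ := ih ν hνμ h1ν 𝒞 (fun A hA => ⟨(h𝒞 A hA).1, hν A hA⟩) δ hδ
  exact ⟨ι, hι.trans ((Ordinal.opow_lt_opow_iff_right Ordinal.one_lt_omega0).2 hνμ), hav⟩

theorem averagesBelow_opow {μ : Ordinal} (hμ : 1 ≤ μ) : AveragesBelow (ω ^ μ) := by
  induction μ using Ordinal.limitRecOn with
  | zero => exact absurd hμ (by simp)
  | add_one ν ih =>
    rcases eq_or_ne ν 0 with rfl | hν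
    · simpa using averagesBelow_omega0
    · exact (ih (Order.one_le_iff_ne_zero.2 hν)).opow_add_one
  | limit μ hl ih => exact averagesBelow_opow_of_isSuccLimit hl ih

theorem hereditary_setOf_convex (P : (ℕ →₀ ℝ) → Prop) :
    Hereditary {F : Finset ℕ | ∀ x : ℕ →₀ ℝ, ↑x.support ⊆ (↑F : Set ℕ) → (∀ i, 0 ≤ x i) →
      (∑ i ∈ F, x i) = 1 → P x} := by
  intro E F hEF hF x hxE hx0 hx1
  have hxE' : x.support ⊆ E := Finset.coe_subset.1 hxE
  refine hF x (hxE.trans (Finset.coe_subset.2 hEF)) hx0 ?_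
  rw [← degree_eq_sum_of_support_subset (hxE'.trans hEF), degree_eq_sum_of_support_subset hxE',
    hx1]

section Norms

variable {x : ℕ →₀ ℝ}

theorem schNorm_nonneg (G : Set (Finset ℕ)) (x : ℕ →₀ ℝ) : 0 ≤ schNorm G x :=
  Real.sSup_nonneg (by rintro r ⟨E, -, rfl⟩; positivity)

theorem schNorm_le {G : Set (Finset ℕ)} (hx : ∀ i, 0 ≤ x i) {c : ℝ} (hc : 0 ≤ c)
    (h : ∀ E ∈ G, ∑ i ∈ E, x i ≤ c) : schNorm G x ≤ c :=
  Real.sSup_le (by rintro r ⟨E, hE, rfl⟩; simpa [abs_of_nonneg (hx _)] using h E hE) hc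

theorem mixedNorm_le {G : ℕ → Set (Finset ℕ)} {θ : ℕ → ℝ} (hθ : Antitone θ)
    (hθ0 : ∀ n, 0 ≤ θ n) (hθ1 : ∀ n, θ n ≤ 1) (hx : ∀ i, 0 ≤ x i) (hx1 : x.degree = 1)
    {c : ℝ} {N : ℕ} (hN : θ N ≤ c) (h : ∀ n < N, ∀ E ∈ G n, ∑ i ∈ E, x i ≤ c) :
    mixedNorm G θ x ≤ c := by
  refine ciSup_le fun n => ?_
  rcases lt_or_ge n N with hn | hn
  · calc θ n * schNorm (G n) x ≤ 1 * c :=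
          mul_le_mul (hθ1 n) (schNorm_le hx ((hθ0 N).trans hN) (h n hn)) (schNorm_nonneg _ _)
            zero_le_one
      _ = c := one_mul c
  · calc θ n * schNorm (G n) x ≤ θ n * 1 := mul_le_mul_of_nonneg_left
          (schNorm_le hx zero_le_one fun E _ => (sum_le_degree hx E).trans hx1.le) (hθ0 n)
      _ ≤ c := by rw [mul_one]; exact (hθ hn).trans hN

end Norms

open Filter in
theorem mixedSchreier_convex_CB_general (G : ℕ → Set (Finset ℕ)) (hreg : ∀ n, IsRegularFam (G n))
    (θ : ℕ → ℝ) (hθ0 : θ 0 = 1)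
    (hθanti : StrictAnti θ) (hθlim : Tendsto θ atTop (nhds 0))
    (ξ : Ordinal) (hξ0 : 0 < ξ)
    (hCB : ∀ n, cbIter (toCantor '' G n) (Ordinal.omega0 ^ ξ) = ∅)
    (ε : ℝ) (hε0 : 0 < ε) :
    ∃ ζ : Ordinal, ζ < Ordinal.omega0 ^ ξ ∧
      cbIter (toCantor ''
        {F : Finset ℕ | ∀ x : ℕ →₀ ℝ, ↑x.support ⊆ (↑F : Set ℕ) → (∀ i, 0 ≤ x i) →
          (∑ i ∈ F, x i) = 1 → ε ≤ mixedNorm G θ x}) ζ = ∅ := by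
  set 𝓕 := {F : Finset ℕ | ∀ x : ℕ →₀ ℝ, ↑x.support ⊆ (↑F : Set ℕ) → (∀ i, 0 ≤ x i) →
    (∑ i ∈ F, x i) = 1 → ε ≤ mixedNorm G θ x}
  have hθnonneg : ∀ n, 0 ≤ θ n := hθanti.antitone.le_of_tendsto hθlim
  have hθle : ∀ n, θ n ≤ 1 := fun n => hθ0 ▸ hθanti.antitone (Nat.zero_le n)
  obtain ⟨N, hN⟩ := (hθlim.eventually (gt_mem_nhds (half_pos hε0))).exists
  have hG : ∀ A ∈ (Finset.range N).image G, Hereditary A ∧ ¬ RankGe A (ω ^ ξ) ∅ := by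
    simp only [Finset.mem_image, Finset.mem_range, forall_exists_index, and_imp,
      forall_apply_eq_imp_iff₂]
    refine fun n _ => ⟨(hreg n).2.1, fun h => ?_⟩
    simpa [hCB n] using toCantor_mem_cbIter_of_rankGe (hreg n).2.1 (hreg n).2.2 h
  obtain ⟨ι, hι, hav⟩ := averagesBelow_opow (Order.one_le_iff_ne_zero.2 hξ0.ne') _ hG _
    (half_pos hε0)
  refine ⟨ι, hι, cbIter_eq_empty_of_not_rankGe (hereditary_setOf_convex _) fun h𝓕 => ?_⟩
  obtain ⟨F, -, hF, x, hxF, hx0, hx1, hxE⟩ :=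
    hav 𝓕 (hereditary_setOf_convex _) 0 ∅ (by rwa [zero_add])
  have hxF' : x.support ⊆ F := hxF.trans Finset.sdiff_subset
  have hεx := rankGe_zero.1 hF x (Finset.coe_subset.2 hxF') hx0
    (by rw [← degree_eq_sum_of_support_subset hxF', hx1])
  have hmix := mixedNorm_le hθanti.antitone hθnonneg hθle hx0 hx1 hN.le fun n hn E hE =>
    (hxE (G n) (Finset.mem_image_of_mem G (Finset.mem_range.2 hn)) E hE).le
  linarith

open Filter in
/-- Let `(𝒢ₙ)` be regular families, `𝒢₀` containing all singletons, with
`CB(𝒢ₙ) ≤ ω^ξ` for all `n` (`0 < ξ < ω₁`), and let `1 = θ₀ > θ₁ > ⋯ → 0`.  Then for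
`0 < ε ≤ 1` the family of finite sets all of whose convex combinations have mixed
Schreier norm `≥ ε` has Cantor–Bendixson index strictly less than `ω^ξ`. -/
theorem mixedSchreier_convex_CB (G : ℕ → Set (Finset ℕ)) (hreg : ∀ n, IsRegularFam (G n))
    (hsing : ∀ i : ℕ, ({i} : Finset ℕ) ∈ G 0) (θ : ℕ → ℝ) (hθ0 : θ 0 = 1)
    (hθanti : StrictAnti θ) (hθlim : Tendsto θ atTop (nhds 0))
    (ξ : Ordinal) (hξ0 : 0 < ξ) (hξ : ξ < (Cardinal.aleph 1).ord)
    (hCB : ∀ n, cbIter (toCantor '' G n) (Ordinal.omega0 ^ ξ) = ∅)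
    (ε : ℝ) (hε0 : 0 < ε) (hε1 : ε ≤ 1) :
    ∃ ζ : Ordinal, ζ < Ordinal.omega0 ^ ξ ∧
      cbIter (toCantor ''
        {F : Finset ℕ | ∀ x : ℕ →₀ ℝ, ↑x.support ⊆ (↑F : Set ℕ) → (∀ i, 0 ≤ x i) →
          (∑ i ∈ F, x i) = 1 → ε ≤ mixedNorm G θ x}) ζ = ∅ :=
  mixedSchreier_convex_CB_general G hreg θ hθ0 hθanti hθlim ξ hξ0 hCB ε hε0
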